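/- arXiv:2601.07733 — 2 statements merged into one kernel-verified Lean document; each statement's English description precedes it below -/
import Mathlib

section
/- For the scalar explicit Euler iteration u_{n+1} = u_n + Δtκ(u_n − u_n³) with 0 < Δtκ < 1/2 and initial value u_0 ∈ (0, 1), the sequence (u_n) is increasing, bounded above by 1, and converges to 1. -/
open Filter

theorem stmt8 (κ Δt : ℝ) (hκ : 0 < κ) (hΔt : 0 < Δt) (h : Δt * κ < 1 / 2)
    (u : ℕ → ℝ) (h0 : u 0 ∈ Set.Ioo (0 : ℝ) 1)
    (hrec : ∀ n, u (n + 1) = u n + Δt * κ * (u n - (u n) ^ 3)) :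
    StrictMono u ∧ (∀ n, u n < 1) ∧ Tendsto u atTop (nhds 1) := by
  set a := Δt * κ with ha
  have ha0 : 0 < a := mul_pos hΔt hκ
  have hinv : ∀ n, 0 < u n ∧ u n < 1 := by
    intro n
    induction n with
    | zero => exact ⟨h0.1, h0.2⟩
    | succ n ih =>
      obtain ⟨h1, h2⟩ := ih
      have hcube : u n - (u n) ^ 3 = u n * (1 - u n) * (1 + u n) := by ring
      have hpos : 0 < u n - (u n) ^ 3 := by
        rw [hcube]
        have := mul_pos (mul_pos h1 (sub_pos.mpr h2)) (by linarith : (0:ℝ) < 1 + u n)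
        linarith
      constructor
      · rw [hrec n]; positivity
      · rw [hrec n]
        nlinarith [sq_nonneg (u n), mul_pos h1 (sub_pos.mpr h2)]
  have hlt : ∀ n, u n < u (n + 1) := by
    intro n
    obtain ⟨h1, h2⟩ := hinv n
    have : 0 < u n - (u n) ^ 3 := by nlinarith [mul_pos (mul_pos h1 (sub_pos.mpr h2)) (by linarith : (0:ℝ) < 1 + u n)]
    rw [hrec n]; nlinarith
  have hmono : StrictMono u := strictMono_nat_of_lt_succ hlt
  have hub : ∀ n, u n < 1 := fun n => (hinv n).2
  refine ⟨hmono, hub, ?_⟩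
  have hbdd : BddAbove (Set.range u) := ⟨1, by rintro x ⟨n, rfl⟩; exact (hub n).le⟩
  set L := ⨆ n, u n with hL
  have htend : Tendsto u atTop (nhds L) :=
    tendsto_atTop_ciSup hmono.monotone hbdd
  have hL1 : L ≤ 1 := ciSup_le fun n => (hub n).le
  have hL0 : 0 < L := lt_of_lt_of_le (hinv 0).1 (le_ciSup hbdd 0)
  have htend' : Tendsto (fun n => u (n + 1)) atTop (nhds L) :=
    htend.comp (tendsto_add_atTop_nat 1)
  have htendf : Tendsto (fun n => u n + a * (u n - (u n) ^ 3)) atTop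
      (nhds (L + a * (L - L ^ 3))) := by
    have : Continuous (fun x : ℝ => x + a * (x - x ^ 3)) := by continuity
    exact (this.tendsto L).comp htend
  have heq : L + a * (L - L ^ 3) = L := by
    apply tendsto_nhds_unique _ htend'
    simpa only [← hrec] using htendf
  have hLfix : L - L ^ 3 = 0 := by
    have := heq
    nlinarith
  have : L = 1 := by
    by_contra hne
    have hLlt : L < 1 := lt_of_le_of_ne hL1 hne
    nlinarith [mul_pos (mul_pos hL0 (sub_pos.mpr hLlt)) (by linarith : (0:ℝ) < 1 + L)]
  rwa [this] at htend
end

section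
/- For the Chafee–Infante equation with zero Dirichlet boundary conditions on Ω, if γλ₁(Ω) ≥ κ where λ₁(Ω) is the first Dirichlet eigenvalue of −Δ, then u ≡ 0 is the unique steady state among solutions with |u| ≤ 1: any smooth v with −γΔv + κ(v³ − v) = 0 in Ω, v = 0 on ∂Ω, and ‖v‖_∞ ≤ 1 satisfies v ≡ 0. -/
open MeasureTheory Set Manifold intervalIntegral

lemma divA (f : Fin 2 → (Fin 2 → ℝ) → ℝ) (hf : ∀ i, ContDiff ℝ 1 (f i))
    (hs : ∀ i, HasCompactSupport (f i)) :
    ∫ x : Fin 2 → ℝ, ∑ i, fderiv ℝ (f i) x (Pi.single i 1) = 0 := by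
  obtain ⟨R, hRpos, hR⟩ : ∃ R : ℝ, 0 < R ∧ ∀ i, ∀ x ∈ tsupport (f i), ‖x‖ < R := by
    obtain ⟨R0, hR0⟩ := ((hs 0).union (hs 1)).isBounded.subset_ball_lt 0 0
    exact ⟨R0, hR0.1, by
      intro i x hx
      have : x ∈ Metric.ball (0 : Fin 2 → ℝ) R0 := hR0.2 (by
        rcases (by omega : i = 0 ∨ i = 1) with h | h <;> subst h
        · exact subset_union_left hx
        · exact subset_union_right hx)
      simpa [dist_eq_norm] using this⟩
  have hzero : ∀ i, ∀ x : Fin 2 → ℝ, R ≤ ‖x‖ → f i x = 0 := by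
    intro i x hx
    by_contra h
    exact absurd (hR i x (subset_tsupport _ h)) (not_lt.2 hx)
  have hDcont : Continuous fun x => ∑ i : Fin 2, fderiv ℝ (f i) x (Pi.single i 1) := by
    refine continuous_finset_sum _ fun i _ => ?_
    exact ((hf i).continuous_fderiv one_ne_zero).clm_apply continuous_const
  have hDsupp : HasCompactSupport fun x => ∑ i : Fin 2, fderiv ℝ (f i) x (Pi.single i 1) := by
    have : ∀ i : Fin 2, HasCompactSupport fun x => fderiv ℝ (f i) x (Pi.single i 1) := by
      intro i
      exact ((hs i).fderiv ℝ).comp_left (g := fun L : (Fin 2 → ℝ) →L[ℝ] ℝ => L (Pi.single i 1)) rfl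
    simpa using ((this 0).add (this 1)).mono (by
      intro x hx
      simp only [Function.mem_support, Fin.sum_univ_two] at *
      exact hx)
  have hDint : Integrable fun x => ∑ i : Fin 2, fderiv ℝ (f i) x (Pi.single i 1) :=
    hDcont.integrable_of_hasCompactSupport hDsupp
  set a : Fin 2 → ℝ := fun _ => -R
  set b : Fin 2 → ℝ := fun _ => R
  have hle : a ≤ b := fun i => by simp [a, b]; linarith
  have key := MeasureTheory.integral_divergence_of_hasFDerivAt_off_countable' a b hle f
    (fun i x => fderiv ℝ (f i) x) ∅ countable_empty
    (fun i => ((hf i).continuous).continuousOn)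
    (fun x _ i => ((hf i).differentiable one_ne_zero).differentiableAt.hasFDerivAt)
    hDint.integrableOn
  -- boundary terms vanish
  have hface : ∀ (i : Fin 2) (c : ℝ), |c| = R → ∀ y : Fin 1 → ℝ, f i (i.insertNth c y) = 0 := by
    intro i c hc y
    apply hzero
    have h1 : |(i.insertNth c y : Fin 2 → ℝ) i| = R := by rw [Fin.insertNth_apply_same]; exact hc
    calc R = |(i.insertNth c y : Fin 2 → ℝ) i| := h1.symm
    _ ≤ ‖(i.insertNth c y : Fin 2 → ℝ)‖ := by
        simpa [Real.norm_eq_abs] using norm_le_pi_norm (i.insertNth c y : Fin 2 → ℝ) i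
  rw [Fin.sum_univ_two] at key
  have h1 : (∫ x : Fin 2 → ℝ, ∑ i : Fin 2, fderiv ℝ (f i) x (Pi.single i 1))
      = ∫ x in Icc a b, ∑ i : Fin 2, fderiv ℝ (f i) x (Pi.single i 1) := by
    refine (setIntegral_eq_integral_of_forall_compl_eq_zero fun x hx => ?_).symm
    have hRx : R < ‖x‖ := by
      simp only [mem_Icc, not_and_or, a, b] at hx
      have : ∃ i, R < |x i| := by
        rcases hx with hx | hx
        · rcases not_forall.1 (fun h => hx (fun i => h i)) with ⟨i, hi⟩
          push_neg at hi
          exact ⟨i, lt_abs.2 (Or.inr (by simp only [Pi.le_def, not_forall, not_le] at hx ⊢; linarith))⟩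
        · rcases not_forall.1 (fun h => hx (fun i => h i)) with ⟨i, hi⟩
          push_neg at hi
          exact ⟨i, lt_abs.2 (Or.inl hi)⟩
      rcases this with ⟨i, hi⟩
      calc R < |x i| := hi
      _ ≤ ‖x‖ := by simpa [Real.norm_eq_abs] using norm_le_pi_norm x i
    have hfz : ∀ i : Fin 2, fderiv ℝ (f i) x = 0 := by
      intro i
      have hev : f i =ᶠ[nhds x] 0 := by
        have : IsOpen {y : Fin 2 → ℝ | R < ‖y‖} := isOpen_lt continuous_const continuous_norm
        filter_upwards [this.mem_nhds hRx] with y hy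
        exact hzero i y (le_of_lt hy)
      rw [hev.fderiv_eq]
      exact fderiv_const_apply 0
    simp [hfz]
  have hb0 : |b 0| = R := by simp [b, abs_of_pos hRpos]
  have ha0 : |a 0| = R := by simp [a, abs_of_pos hRpos]
  have hface' : ∀ (i : Fin 2) (c : ℝ), |c| = R →
      (∫ y in Icc (a ∘ Fin.succAbove i) (b ∘ Fin.succAbove i), f i (i.insertNth c y)) = 0 := by
    intro i c hc
    rw [MeasureTheory.setIntegral_congr_fun measurableSet_Icc
      (fun y _ => hface i c hc y)]
    simp
  rw [h1]
  rw [show (Icc a b : Set (Fin 2 → ℝ)) = Icc a b from rfl]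
  rw [key]
  rw [hface' 0 (b 0) hb0, hface' 0 (a 0) ha0, hface' 1 (b 1) hb0, hface' 1 (a 1) ha0]
  ring

lemma divB (f : Fin 2 → EuclideanSpace ℝ (Fin 2) → ℝ) (hf : ∀ i, ContDiff ℝ 1 (f i))
    (hs : ∀ i, HasCompactSupport (f i)) :
    ∫ x : EuclideanSpace ℝ (Fin 2), ∑ i, fderiv ℝ (f i) x (EuclideanSpace.single i 1) = 0 := by
  set e : EuclideanSpace ℝ (Fin 2) ≃L[ℝ] (Fin 2 → ℝ) :=
    (EuclideanSpace.equiv (Fin 2) ℝ : EuclideanSpace ℝ (Fin 2) ≃L[ℝ] (Fin 2 → ℝ))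
  set g : Fin 2 → (Fin 2 → ℝ) → ℝ := fun i => (f i) ∘ e.symm
  have hg : ∀ i, ContDiff ℝ 1 (g i) := fun i => (hf i).comp e.symm.contDiff
  have hgs : ∀ i, HasCompactSupport (g i) := fun i =>
    (hs i).comp_homeomorph e.symm.toHomeomorph
  have key := divA g hg hgs
  have hφ := EuclideanSpace.volume_preserving_symm_measurableEquiv_toLp (Fin 2)
  have comp := hφ.integral_comp (MeasurableEquiv.toLp 2 (Fin 2 → ℝ)).symm.measurableEmbedding
    (fun y => ∑ i, fderiv ℝ (g i) y (Pi.single i 1))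
  rw [← comp] at key
  rw [← key]
  refine integral_congr_ae (Filter.Eventually.of_forall fun x => ?_)
  refine Finset.sum_congr rfl fun i _ => ?_
  have hd : HasFDerivAt (g i) ((fderiv ℝ (f i) x).comp (e.symm : (Fin 2 → ℝ) →L[ℝ] EuclideanSpace ℝ (Fin 2))) (e x) := by
    have h1 : HasFDerivAt (f i) (fderiv ℝ (f i) x) (e.symm (e x)) := by
      rw [e.symm_apply_apply]
      exact ((hf i).differentiable one_ne_zero).differentiableAt.hasFDerivAt
    exact h1.comp (e x) e.symm.hasFDerivAt
  have : (MeasurableEquiv.toLp 2 (Fin 2 → ℝ)).symm x = e x := rfl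
  rw [this, hd.fderiv]
  have : (e.symm (Pi.single i 1) : EuclideanSpace ℝ (Fin 2)) = EuclideanSpace.single i 1 := rfl
  simp only [ContinuousLinearMap.comp_apply]
  rw [show ((e.symm : (Fin 2 → ℝ) →L[ℝ] EuclideanSpace ℝ (Fin 2)) (Pi.single i 1)) = EuclideanSpace.single i 1 from rfl]

lemma opnormC (L : EuclideanSpace ℝ (Fin 2) →L[ℝ] ℝ) :
    ‖L‖ ^ 2 ≤ ∑ i : Fin 2, (L (EuclideanSpace.single i 1)) ^ 2 := by
  have hnn : (0:ℝ) ≤ ∑ i : Fin 2, (L (EuclideanSpace.single i 1)) ^ 2 :=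
    Finset.sum_nonneg fun i _ => sq_nonneg _
  set w : EuclideanSpace ℝ (Fin 2) :=
    (WithLp.equiv 2 (Fin 2 → ℝ)).symm (fun i => L (EuclideanSpace.single i 1)) with hw
  have hwnorm : ‖w‖ = Real.sqrt (∑ i : Fin 2, (L (EuclideanSpace.single i 1)) ^ 2) := by
    rw [EuclideanSpace.norm_eq]
    congr 1
    refine Finset.sum_congr rfl fun i _ => ?_
    rw [show ‖w i‖ = |L (EuclideanSpace.single i 1)| from rfl, sq_abs]
  have hb : ‖L‖ ≤ Real.sqrt (∑ i : Fin 2, (L (EuclideanSpace.single i 1)) ^ 2) := by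
    refine L.opNorm_le_bound (Real.sqrt_nonneg _) fun u => ?_
    have hu : u = ∑ i : Fin 2, EuclideanSpace.single i (u i) := by
      ext j
      simp [EuclideanSpace.single_apply, Fin.sum_univ_two]
      rcases (by omega : j = 0 ∨ j = 1) with h | h <;> subst h <;> norm_num
    have hLu : L u = ∑ i : Fin 2, u i * L (EuclideanSpace.single i 1) := by
      conv_lhs => rw [hu]
      rw [map_sum]
      refine Finset.sum_congr rfl fun i _ => ?_
      have h2 : EuclideanSpace.single i (u i) = u i • EuclideanSpace.single i (1:ℝ) := by
        ext j; simp [EuclideanSpace.single_apply]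
      rw [h2, ContinuousLinearMap.map_smul]; simp
    have hinner : L u = inner ℝ w u := by
      rw [hLu, PiLp.inner_apply]
      refine Finset.sum_congr rfl fun i _ => ?_
      simp only [RCLike.inner_apply, conj_trivial]
      rfl
    rw [Real.norm_eq_abs (L u), hinner, ← hwnorm]
    exact abs_real_inner_le_norm w u
  calc ‖L‖ ^ 2 ≤ Real.sqrt (∑ i : Fin 2, (L (EuclideanSpace.single i 1)) ^ 2) ^ 2 :=
        pow_le_pow_left₀ (norm_nonneg L) hb 2
  _ = _ := Real.sq_sqrt hnn

lemma psi_exists (ε : ℝ) (hε : 0 < ε) : ∃ ψ η : ℝ → ℝ, ContDiff ℝ 1 ψ ∧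
    (∀ t, HasDerivAt ψ (η t) t) ∧ (∀ t, 0 ≤ η t) ∧ (∀ t, η t ≤ 1) ∧
    (∀ t, |t| ≤ ε → ψ t = 0 ∧ η t = 0) ∧ (∀ t, 0 ≤ ψ t * t) ∧
    (∀ t, |ψ t| ≤ |t|) ∧ (∀ t, |t - ψ t| ≤ 2*ε) := by
  set η : ℝ → ℝ := fun s => Real.smoothTransition (s^2/ε^2 - 1) with hη
  have hηc : Continuous η :=
    Real.smoothTransition.continuous.comp (by continuity)
  have hη0 : ∀ s, 0 ≤ η s := fun s => Real.smoothTransition.nonneg _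
  have hη1 : ∀ s, η s ≤ 1 := fun s => Real.smoothTransition.le_one _
  have hηz : ∀ s, |s| ≤ ε → η s = 0 := by
    intro s hs
    apply Real.smoothTransition.zero_of_nonpos
    have : s^2 ≤ ε^2 := by nlinarith [abs_nonneg s, neg_abs_le s, le_abs_self s]
    have h2 : (0:ℝ) < ε^2 := by positivity
    rw [sub_nonpos, div_le_one h2]
    exact this
  have hηo : ∀ s, 2*ε ≤ |s| → η s = 1 := by
    intro s hs
    apply Real.smoothTransition.one_of_one_le
    have h1 : (2*ε)^2 ≤ s^2 := by nlinarith [abs_nonneg s, neg_abs_le s, le_abs_self s, sq_abs s]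
    have h2 : (0:ℝ) < ε^2 := by positivity
    rw [le_sub_iff_add_le, le_div_iff₀ h2]
    nlinarith
  have hint : ∀ a b : ℝ, IntervalIntegrable η volume a b := fun a b =>
    hηc.intervalIntegrable a b
  set ψ : ℝ → ℝ := fun t => ∫ s in (0:ℝ)..t, η s with hψ
  have hψd : ∀ t, HasDerivAt ψ (η t) t := by
    intro t
    exact intervalIntegral.integral_hasDerivAt_right (hint 0 t)
      (hηc.stronglyMeasurableAtFilter _ _) hηc.continuousAt
  have hψC1 : ContDiff ℝ 1 ψ := by
    rw [contDiff_one_iff_deriv]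
    refine ⟨fun t => (hψd t).differentiableAt, ?_⟩
    have : deriv ψ = η := funext fun t => (hψd t).deriv
    rw [this]; exact hηc
  refine ⟨ψ, η, hψC1, hψd, hη0, hη1, ?_, ?_, ?_, ?_⟩
  · intro t ht
    refine ⟨?_, hηz t ht⟩
    have : EqOn η 0 (uIcc 0 t) := by
      intro s hs
      apply hηz
      rcases le_total 0 t with h | h
      · rw [uIcc_of_le h] at hs
        rw [abs_le]; constructor
        · linarith [hs.1, hε]
        · calc s ≤ t := hs.2
          _ ≤ ε := by rw [abs_le] at ht; exact ht.2
      · rw [uIcc_of_ge h] at hs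
        rw [abs_le]; constructor
        · calc -ε ≤ t := by rw [abs_le] at ht; linarith [ht.1]
          _ ≤ s := hs.1
        · linarith [hs.2, hε]
    calc ψ t = ∫ s in (0:ℝ)..t, (0:ℝ) := intervalIntegral.integral_congr this
    _ = 0 := intervalIntegral.integral_zero
  · intro t
    rcases le_total 0 t with h | h
    · have : 0 ≤ ψ t := intervalIntegral.integral_nonneg h (fun s _ => hη0 s)
      positivity
    · have h1 : ψ t ≤ 0 := by
        rw [hψ]
        simp only
        rw [intervalIntegral.integral_symm]
        simp only [neg_nonpos]
        exact intervalIntegral.integral_nonneg h (fun s _ => hη0 s)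
      nlinarith
  · intro t
    rcases le_total 0 t with h | h
    · have h1 : 0 ≤ ψ t := intervalIntegral.integral_nonneg h (fun s _ => hη0 s)
      have h2 : ψ t ≤ t := by
        have h3 := intervalIntegral.integral_mono_on (μ := volume) h (hint 0 t)
          intervalIntegrable_const (fun s _ => hη1 s)
        simpa using h3
      rw [abs_of_nonneg h1, abs_of_nonneg h]; exact h2
    · have h1 : ψ t ≤ 0 := by
        rw [hψ]; simp only
        rw [intervalIntegral.integral_symm]
        simp only [neg_nonpos]
        exact intervalIntegral.integral_nonneg h (fun s _ => hη0 s)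
      have h2 : t ≤ ψ t := by
        rw [hψ]; simp only
        rw [intervalIntegral.integral_symm]
        have : ∫ s in t..(0:ℝ), η s ≤ ∫ s in t..(0:ℝ), (1:ℝ) :=
          intervalIntegral.integral_mono_on h (hint t 0) intervalIntegrable_const
            (fun s _ => hη1 s)
        simp at this ⊢
        linarith
      rw [abs_of_nonpos h1, abs_of_nonpos h]; linarith
  · intro t
    rcases le_total 0 t with h | h
    · have h1 : ψ t ≤ t := by
        have h3 := intervalIntegral.integral_mono_on (μ := volume) h (hint 0 t)
          intervalIntegrable_const (fun s _ => hη1 s)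
        simpa using h3
      have h2 : t - ψ t ≤ 2*ε := by
        rcases le_total t (2*ε) with h3 | h3
        · have : 0 ≤ ψ t := intervalIntegral.integral_nonneg h (fun s _ => hη0 s)
          linarith
        · have hsplit : ψ t = (∫ s in (0:ℝ)..(2*ε), η s) + ∫ s in (2*ε)..t, η s :=
            (intervalIntegral.integral_add_adjacent_intervals (hint 0 (2*ε)) (hint (2*ε) t)).symm
          have htail : ∫ s in (2*ε)..t, η s = ∫ s in (2*ε)..t, (1:ℝ) := by
            apply intervalIntegral.integral_congr
            intro s hs
            rw [uIcc_of_le h3] at hs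
            exact hηo s (le_trans hs.1 (le_abs_self s))
          have hhead : 0 ≤ ∫ s in (0:ℝ)..(2*ε), η s :=
            intervalIntegral.integral_nonneg (by linarith) (fun s _ => hη0 s)
          rw [hsplit, htail]
          simp
          linarith
      rw [abs_of_nonneg (by linarith)]; exact h2
    · have h1 : t ≤ ψ t := by
        rw [hψ]; simp only
        rw [intervalIntegral.integral_symm]
        have : ∫ s in t..(0:ℝ), η s ≤ ∫ s in t..(0:ℝ), (1:ℝ) :=
          intervalIntegral.integral_mono_on h (hint t 0) intervalIntegrable_const
            (fun s _ => hη1 s)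
        simp at this ⊢
        linarith
      have h2 : ψ t - t ≤ 2*ε := by
        rcases le_total (-(2*ε)) t with h3 | h3
        · have : ψ t ≤ 0 := by
            rw [hψ]; simp only
            rw [intervalIntegral.integral_symm]
            simp only [neg_nonpos]
            exact intervalIntegral.integral_nonneg h (fun s _ => hη0 s)
          linarith
        · have hsplit : ψ t = (∫ s in (0:ℝ)..(-(2*ε)), η s) + ∫ s in (-(2*ε))..t, η s :=
            (intervalIntegral.integral_add_adjacent_intervals (hint 0 (-(2*ε))) (hint (-(2*ε)) t)).symm
          have htail : ∫ s in (-(2*ε))..t, η s = ∫ s in (-(2*ε))..t, (1:ℝ) := by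
            apply intervalIntegral.integral_congr
            intro s hs
            rw [uIcc_of_ge h3] at hs
            apply hηo
            calc 2*ε ≤ -s := by linarith [hs.2]
            _ ≤ |s| := neg_le_abs s
          have hhead : ∫ s in (0:ℝ)..(-(2*ε)), η s ≤ 0 := by
            rw [intervalIntegral.integral_symm]
            simp only [neg_nonpos]
            exact intervalIntegral.integral_nonneg (by linarith) (fun s _ => hη0 s)
          rw [hsplit, htail]
          simp
          linarith
      rw [abs_of_nonpos (by linarith)]; linarith

lemma arithE (a t ε : ℝ) (hε : 0 < ε) (h1 : 0 ≤ a*t) (h2 : |a| ≤ |t|)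
    (h3 : |t - a| ≤ 2*ε) (h4 : |t| ≤ 1) :
    t^4 - 4*ε ≤ a^2 - a*(t - t^3) := by
  have ha1 : |a| ≤ 1 := h2.trans h4
  have key1 : -(2*ε) ≤ a^2 - a*t := by
    have : a*(t-a) ≤ |a| * |t-a| := by
      calc a*(t-a) ≤ |a*(t-a)| := le_abs_self _
      _ = |a| * |t-a| := abs_mul _ _
    have h5 : |a| * |t-a| ≤ 1 * (2*ε) := by
      apply mul_le_mul ha1 h3 (abs_nonneg _) zero_le_one
    nlinarith
  have key2 : t^4 - 2*ε ≤ a*t^3 := by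
    have h6 : |t^3| ≤ 1 := by
      rw [abs_pow]; exact pow_le_one₀ (abs_nonneg t) h4
    have : t^3*(t-a) ≤ |t^3| * |t-a| := by
      calc t^3*(t-a) ≤ |t^3*(t-a)| := le_abs_self _
      _ = |t^3| * |t-a| := abs_mul _ _
    have h5 : |t^3| * |t-a| ≤ 1 * (2*ε) := by
      apply mul_le_mul h6 h3 (abs_nonneg _) zero_le_one
    nlinarith
  nlinarith

theorem stmt10 (Ω : Set (EuclideanSpace ℝ (Fin 2))) (hΩo : IsOpen Ω)
    (hΩb : Bornology.IsBounded Ω)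
    (γ κ lam1 : ℝ) (hγ : 0 < γ) (hκ : 0 < κ) (hlam1 : 0 < lam1)
    (hpoincare : ∀ w : EuclideanSpace ℝ (Fin 2) → ℝ, ContDiff ℝ 1 w →
      (∀ x ∈ frontier Ω, w x = 0) →
      lam1 * ∫ x in Ω, (w x) ^ 2 ≤ ∫ x in Ω, ‖fderiv ℝ w x‖ ^ 2)
    (hgap : κ ≤ γ * lam1)
    (v : EuclideanSpace ℝ (Fin 2) → ℝ) (hv : ContDiff ℝ (⊤ : ℕ∞) v)
    (hPDE : ∀ x ∈ Ω,
      -γ * (∑ i : Fin 2,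
          fderiv ℝ (fun y => fderiv ℝ v y (EuclideanSpace.single i 1)) x
            (EuclideanSpace.single i 1))
        + κ * ((v x) ^ 3 - v x) = 0)
    (hbc : ∀ x ∈ frontier Ω, v x = 0)
    (hbnd : ∀ x, |v x| ≤ 1) :
    ∀ x ∈ Ω, v x = 0 := by
  have hvd : Differentiable ℝ v := hv.differentiable (by simp)
  have hvcont : Continuous v := hv.continuous
  have hKc : IsCompact (closure Ω) := hΩb.isCompact_closure
  have hμfin : volume Ω < ⊤ := hΩb.measure_lt_top
  have hIntOn : ∀ g : EuclideanSpace ℝ (Fin 2) → ℝ, Continuous g → IntegrableOn g Ω volume :=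
    fun g hg => (hg.continuousOn.integrableOn_compact hKc).mono_set subset_closure
  have hdvi : ∀ i : Fin 2, ContDiff ℝ (⊤ : ℕ∞) (fun x => fderiv ℝ v x (EuclideanSpace.single i 1)) :=
    fun i => (hv.fderiv_right (by simp)).clm_apply contDiff_const
  set S : EuclideanSpace ℝ (Fin 2) → ℝ :=
    fun x => ∑ i : Fin 2, (fderiv ℝ v x (EuclideanSpace.single i 1))^2 with hSdef
  set Lp : EuclideanSpace ℝ (Fin 2) → ℝ := fun x => ∑ i : Fin 2,
    fderiv ℝ (fun y => fderiv ℝ v y (EuclideanSpace.single i 1)) x (EuclideanSpace.single i 1)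
    with hLdef
  have hScont : Continuous S := continuous_finset_sum _ fun i _ => ((hdvi i).continuous).pow 2
  have hSnn : ∀ x, 0 ≤ S x := fun x => Finset.sum_nonneg fun i _ => sq_nonneg _
  have hLcont : Continuous Lp := continuous_finset_sum _ fun i _ =>
    ((((hdvi i).fderiv_right (m := (⊤ : ℕ∞)) (by simp))).clm_apply contDiff_const).continuous
  have hLpde : ∀ x ∈ Ω, Lp x = (κ/γ) * ((v x)^3 - v x) := by
    intro x hx
    have h := hPDE x hx
    have h2 : γ * Lp x = κ * ((v x)^3 - v x) := by rw [hLdef]; simp only; linarith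
    field_simp
    linear_combination h2
  -- key estimate
  have key : ∀ ε : ℝ, 0 < ε → ∫ x in Ω, (v x)^4 ≤ 4*ε*(volume Ω).toReal := by
    intro ε hε
    obtain ⟨ψ, η, hψC1, hψd, hη0, hη1, hψz, hψsign, hψle, hψdiff⟩ := psi_exists ε hε
    have hψcont : Continuous ψ := hψC1.continuous
    have hηcont : Continuous η := by
      have h : deriv ψ = η := funext fun t => (hψd t).deriv
      rw [← h]
      exact (contDiff_one_iff_deriv.1 hψC1).2
    -- compact sets and cutoff
    set Sε : Set (EuclideanSpace ℝ (Fin 2)) := closure Ω ∩ {x | ε ≤ |v x|} with hSe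
    have hSεc : IsCompact Sε := hKc.inter_right (isClosed_le continuous_const hvcont.abs)
    have hSεΩ : Sε ⊆ Ω := by
      rintro x ⟨hx1, hx2⟩
      by_contra hxΩ
      have hfr : x ∈ frontier Ω := ⟨hx1, by rw [hΩo.interior_eq]; exact hxΩ⟩
      have h0 := hbc x hfr
      rw [mem_setOf_eq, h0] at hx2
      simp at hx2
      linarith
    obtain ⟨K2, hK2c, hK2i, hK2Ω⟩ := exists_compact_between hSεc hΩo hSεΩ
    obtain ⟨K3, hK3c, hK3i, hK3Ω⟩ := exists_compact_between hK2c hΩo hK2Ω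
    obtain ⟨χf, hχ0, hχ1, hχ01⟩ := exists_contMDiffMap_zero_one_of_isClosed (n := (⊤ : ℕ∞))
      (𝓘(ℝ, EuclideanSpace ℝ (Fin 2))) (isOpen_interior (s := K3)).isClosed_compl
      hK2c.isClosed (disjoint_compl_left.mono_right hK3i)
    set χ : EuclideanSpace ℝ (Fin 2) → ℝ := ⇑χf with hχdef
    have hχsm : ContDiff ℝ 1 χ := by
      have h := χf.contMDiff
      rw [contMDiff_iff_contDiff] at h
      exact h.of_le (by exact_mod_cast (le_top : (1:ℕ∞) ≤ ⊤))
    have hχK3 : ∀ x, x ∉ K3 → χ x = 0 := fun x hx =>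
      hχ0 (fun hxint => hx (interior_subset hxint))
    have hχcs : HasCompactSupport χ := HasCompactSupport.intro hK3c hχK3
    -- the vector field
    set F : Fin 2 → EuclideanSpace ℝ (Fin 2) → ℝ :=
      fun i x => χ x * (ψ (v x) * fderiv ℝ v x (EuclideanSpace.single i 1)) with hF
    have hψvC1 : ContDiff ℝ 1 (fun x => ψ (v x)) := hψC1.comp (hv.of_le (by simp))
    have hFC1 : ∀ i, ContDiff ℝ 1 (F i) := fun i =>
      hχsm.mul (hψvC1.mul ((hdvi i).of_le (by simp)))
    have hFcs : ∀ i, HasCompactSupport (F i) := fun i =>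
      HasCompactSupport.intro hK3c (fun x hx => by rw [hF]; simp [hχK3 x hx])
    have hdiv := divB F hFC1 hFcs
    set D : EuclideanSpace ℝ (Fin 2) → ℝ :=
      fun x => ∑ i : Fin 2, fderiv ℝ (F i) x (EuclideanSpace.single i 1) with hD
    have hDcont : Continuous D := continuous_finset_sum _ fun i _ =>
      ((hFC1 i).continuous_fderiv one_ne_zero).clm_apply continuous_const
    have hDz : ∀ x, x ∉ K3 → D x = 0 := by
      intro x hx
      have h : ∀ i : Fin 2, fderiv ℝ (F i) x = 0 := by
        intro i
        have hev : F i =ᶠ[nhds x] (fun _ => (0:ℝ)) := by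
          filter_upwards [hK3c.isClosed.isOpen_compl.mem_nhds hx] with y hy
          rw [hF]; simp [hχK3 y hy]
        rw [hev.fderiv_eq]; exact fderiv_const_apply 0
      rw [hD]; simp [h]
    have hDcs : HasCompactSupport D := HasCompactSupport.intro hK3c hDz
    have hDint : Integrable D := hDcont.integrable_of_hasCompactSupport hDcs
    have hsplit : ∫ x in Ω, D x = 0 := by
      have h1 : (∫ x in Ω, D x) + ∫ x in Ωᶜ, D x = ∫ x, D x :=
        integral_add_compl hΩo.measurableSet hDint
      have h2 : ∫ x in Ωᶜ, D x = 0 :=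
        setIntegral_eq_zero_of_forall_eq_zero fun x hx => hDz x (fun hK => hx (hK3Ω hK))
      have h3 : ∫ x, D x = 0 := hdiv
      linarith
    -- pointwise identity on Ω
    have hψvd : ∀ x, HasFDerivAt (fun y => ψ (v y)) (η (v x) • fderiv ℝ v x) x :=
      fun x => (hψd (v x)).comp_hasFDerivAt x (hvd x).hasFDerivAt
    have hDeq : ∀ x ∈ Ω, D x = η (v x) * S x + ψ (v x) * Lp x := by
      intro x hx
      by_cases hve : ε ≤ |v x|
      · have hxK2 : x ∈ interior K2 := hK2i ⟨subset_closure hx, hve⟩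
        have hfd : ∀ i : Fin 2, fderiv ℝ (F i) x (EuclideanSpace.single i 1) =
            ψ (v x) * (fderiv ℝ (fun y => fderiv ℝ v y (EuclideanSpace.single i 1)) x
              (EuclideanSpace.single i 1))
            + η (v x) * (fderiv ℝ v x (EuclideanSpace.single i 1))^2 := by
          intro i
          have hev : F i =ᶠ[nhds x]
              (fun y => ψ (v y) * fderiv ℝ v y (EuclideanSpace.single i 1)) := by
            filter_upwards [isOpen_interior.mem_nhds hxK2] with y hy
            rw [hF]; simp [hχ1 (interior_subset hy)]
          rw [hev.fderiv_eq]
          rw [fderiv_fun_mul (hψvd x).differentiableAt (((hdvi i).differentiable (by simp)) x)]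
          rw [(hψvd x).fderiv]
          simp only [ContinuousLinearMap.add_apply, ContinuousLinearMap.smul_apply,
            smul_eq_mul]
          ring
        rw [hD, hSdef, hLdef]
        simp only
        rw [Finset.sum_congr rfl (fun i _ => hfd i), Finset.sum_add_distrib,
          ← Finset.mul_sum, ← Finset.mul_sum]
        ring
      · push_neg at hve
        have hz := hψz (v x) (le_of_lt hve)
        have hev : ∀ i : Fin 2, F i =ᶠ[nhds x] (fun _ => (0:ℝ)) := by
          intro i
          have hopen : IsOpen {y | |v y| < ε} := isOpen_lt hvcont.abs continuous_const
          filter_upwards [hopen.mem_nhds hve] with y hy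
          rw [hF]; simp [(hψz (v y) (le_of_lt hy)).1]
        have h : ∀ i : Fin 2, fderiv ℝ (F i) x = 0 := fun i => by
          rw [(hev i).fderiv_eq]; exact fderiv_const_apply 0
        rw [hD]; simp [h, hz.1, hz.2]
    -- integral identities
    have hcψ : Continuous fun x => ψ (v x) := hψcont.comp hvcont
    have hcη : Continuous fun x => η (v x) := hηcont.comp hvcont
    have hI1 : IntegrableOn (fun x => η (v x) * S x) Ω volume := hIntOn _ (hcη.mul hScont)
    have hI2 : IntegrableOn (fun x => ψ (v x) * (v x - (v x)^3)) Ω volume :=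
      hIntOn _ (hcψ.mul (hvcont.sub (hvcont.pow 3)))
    have hAB : ∫ x in Ω, η (v x) * S x = (κ/γ) * ∫ x in Ω, ψ (v x) * (v x - (v x)^3) := by
      have hID : ∫ x in Ω, D x =
          ∫ x in Ω, (η (v x) * S x + (-(κ/γ)) * (ψ (v x) * (v x - (v x)^3))) := by
        refine setIntegral_congr_fun hΩo.measurableSet fun x hx => ?_
        rw [hDeq x hx, hLpde x hx]
        ring
      rw [hsplit] at hID
      rw [integral_add hI1 (hI2.const_mul _)] at hID
      rw [MeasureTheory.integral_const_mul] at hID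
      linarith
    -- Poincare
    have hwz : ∀ x ∈ frontier Ω, ψ (v x) = 0 := fun x hx => by
      rw [hbc x hx]; exact (hψz 0 (by simp [le_of_lt hε])).1
    have hpoin := hpoincare (fun x => ψ (v x)) hψvC1 hwz
    have hgradbound : ∀ x, ‖fderiv ℝ (fun y => ψ (v y)) x‖^2 ≤ η (v x) * S x := by
      intro x
      rw [(hψvd x).fderiv]
      have h1 : ‖η (v x) • fderiv ℝ v x‖^2 = (η (v x))^2 * ‖fderiv ℝ v x‖^2 := by
        rw [norm_smul, Real.norm_eq_abs, mul_pow, sq_abs]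
      rw [h1]
      have h2 : (η (v x))^2 * ‖fderiv ℝ v x‖^2 ≤ (η (v x))^2 * S x :=
        mul_le_mul_of_nonneg_left (opnormC _) (sq_nonneg _)
      have h3 : (η (v x))^2 * S x ≤ η (v x) * S x := by
        nlinarith [mul_nonneg (mul_nonneg (hη0 (v x)) (sub_nonneg.2 (hη1 (v x)))) (hSnn x)]
      linarith
    have hgradcont : Continuous fun x => ‖fderiv ℝ (fun y => ψ (v y)) x‖^2 := by
      have h2 : (fun x => ‖fderiv ℝ (fun y => ψ (v y)) x‖^2)
          = fun x => ‖η (v x) • fderiv ℝ v x‖^2 := funext fun x => by rw [(hψvd x).fderiv]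
      rw [h2]
      exact ((hcη.smul (hv.fderiv_right (m := (⊤ : ℕ∞)) (by simp)).continuous).norm.pow 2)
    have hstep1 : lam1 * ∫ x in Ω, (ψ (v x))^2 ≤ ∫ x in Ω, η (v x) * S x :=
      le_trans hpoin (setIntegral_mono_on (hIntOn _ hgradcont) hI1 hΩo.measurableSet
        (fun x _ => hgradbound x))
    have hBnn : 0 ≤ ∫ x in Ω, ψ (v x) * (v x - (v x)^3) := by
      refine setIntegral_nonneg hΩo.measurableSet fun x _ => ?_
      have h1 : 0 ≤ ψ (v x) * v x := hψsign _
      have h2 : (v x)^2 ≤ 1 := by nlinarith [abs_le.1 (hbnd x), abs_nonneg (v x)]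
      nlinarith
    have hκγ : κ/γ ≤ lam1 := by rw [div_le_iff₀ hγ]; linarith
    have hfinal1 : ∫ x in Ω, (ψ (v x))^2 ≤ ∫ x in Ω, ψ (v x) * (v x - (v x)^3) := by
      have h1 : lam1 * ∫ x in Ω, (ψ (v x))^2 ≤ lam1 * ∫ x in Ω, ψ (v x) * (v x - (v x)^3) := by
        rw [hAB] at hstep1
        calc lam1 * ∫ x in Ω, (ψ (v x))^2
            ≤ (κ/γ) * ∫ x in Ω, ψ (v x) * (v x - (v x)^3) := hstep1
          _ ≤ lam1 * ∫ x in Ω, ψ (v x) * (v x - (v x)^3) :=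
              mul_le_mul_of_nonneg_right hκγ hBnn
      exact le_of_mul_le_mul_left h1 hlam1
    -- combine with arithE
    have hIψ2 : IntegrableOn (fun x => (ψ (v x))^2) Ω volume := hIntOn _ (hcψ.pow 2)
    have hmono : ∫ x in Ω, (v x)^4 ≤
        ∫ x in Ω, ((ψ (v x))^2 - ψ (v x) * (v x - (v x)^3) + 4*ε) := by
      refine setIntegral_mono_on (hIntOn _ (hvcont.pow 4)) ?_ hΩo.measurableSet ?_
      · exact ((hIψ2.sub hI2).add (integrableOn_const hμfin.ne) :
          IntegrableOn (fun x => (ψ (v x))^2 - ψ (v x)*(v x - (v x)^3) + 4*ε) Ω volume)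
      · intro x _
        have := arithE (ψ (v x)) (v x) ε hε (hψsign _) (hψle _) (hψdiff _) (hbnd x)
        linarith
    have hIsub : IntegrableOn (fun x => (ψ (v x))^2 - ψ (v x)*(v x - (v x)^3)) Ω volume :=
      hIψ2.sub hI2
    have hsplit2 : ∫ x in Ω, ((ψ (v x))^2 - ψ (v x) * (v x - (v x)^3) + 4*ε)
        = (∫ x in Ω, ((ψ (v x))^2 - ψ (v x)*(v x - (v x)^3))) + 4*ε*(volume Ω).toReal := by
      rw [integral_add hIsub (integrableOn_const hμfin.ne)]
      rw [setIntegral_const]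
      simp [smul_eq_mul]
      rw [measureReal_def]; ring
    have hneg : ∫ x in Ω, ((ψ (v x))^2 - ψ (v x)*(v x - (v x)^3)) ≤ 0 := by
      rw [integral_sub hIψ2 hI2]
      linarith
    calc ∫ x in Ω, (v x)^4 ≤ _ := hmono
    _ = _ := hsplit2
    _ ≤ 4*ε*(volume Ω).toReal := by linarith
  -- conclude
  have hv4nn : 0 ≤ ∫ x in Ω, (v x)^4 :=
    setIntegral_nonneg hΩo.measurableSet fun x _ => by positivity
  have hv4z : ∫ x in Ω, (v x)^4 = 0 := by
    by_contra hne
    have hpos : 0 < ∫ x in Ω, (v x)^4 := lt_of_le_of_ne hv4nn (Ne.symm hne)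
    set M := (volume Ω).toReal with hM
    have hMnn : 0 ≤ M := ENNReal.toReal_nonneg
    have hc := key ((∫ x in Ω, (v x)^4)/(8*(M+1))) (by positivity)
    have : 4*((∫ x in Ω, (v x)^4)/(8*(M+1)))*M < ∫ x in Ω, (v x)^4 := by
      have h8 : (0:ℝ) < 8*(M+1) := by positivity
      have he : 4*((∫ x in Ω, (v x)^4)/(8*(M+1)))*M
          = ((∫ x in Ω, (v x)^4)*(4*M))/(8*(M+1)) := by ring
      rw [he, div_lt_iff₀ h8]
      nlinarith
    linarith
  have hae : ∀ᵐ x ∂(volume.restrict Ω), (v x)^4 = 0 := by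
    have h := (setIntegral_eq_zero_iff_of_nonneg_ae
      (Filter.Eventually.of_forall fun x => by show (0:ℝ) ≤ (v x)^4; positivity) (hIntOn _ (hvcont.pow 4))).1 hv4z
    filter_upwards [h] with x hx using hx
  intro x hx
  by_contra hvx
  obtain ⟨r, hr, hball⟩ : ∃ r > 0, Metric.ball x r ⊆ Ω ∩ {y | v y ≠ 0} := by
    have hopen : IsOpen (Ω ∩ {y | v y ≠ 0}) :=
      hΩo.inter (isOpen_ne_fun hvcont continuous_const)
    rcases Metric.isOpen_iff.1 hopen x ⟨hx, hvx⟩ with ⟨r, hr, hball⟩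
    exact ⟨r, hr, hball⟩
  have hnull : volume.restrict Ω {y | (v y)^4 ≠ 0} = 0 := by
    rw [ae_iff] at hae
    exact hae
  have hsub : Metric.ball x r ⊆ {y | (v y)^4 ≠ 0} ∩ Ω := by
    intro y hy
    rcases hball hy with ⟨h1, h2⟩
    exact ⟨pow_ne_zero 4 h2, h1⟩
  have hmeas : volume.restrict Ω {y | (v y)^4 ≠ 0} ≥ volume (Metric.ball x r) := by
    rw [Measure.restrict_apply (by
      have : Continuous fun y => (v y)^4 := hvcont.pow 4
      exact (isOpen_ne_fun this continuous_const).measurableSet)]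
    exact measure_mono hsub
  have hbpos : 0 < volume (Metric.ball x r) := Metric.measure_ball_pos volume x hr
  rw [hnull] at hmeas
  exact absurd hmeas (by simp [hbpos.ne', hr, Real.pi_pos])
end
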